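/- Let n ≥ 2 and let K_n• be the subdivision of the complete graph K_n. Then every coloring of V(K_n•) all of whose color classes are odd sets is injective on the n original vertices of K_n; consequently, every partition of V(K_n•) into odd sets has at least n parts. -/

import Mathlib

/-- A set `S` of vertices of `G` is *odd* if every vertex of `S` has an odd number of
neighbors inside `S`. -/
def SimpleGraph.IsOddSet {V : Type*} (G : SimpleGraph V) (S : Set V) : Prop :=
  ∀ v ∈ S, Odd (S ∩ G.neighborSet v).ncard

/-- The subdivision `G•` of a graph `G`: its vertices are the vertices of `G` together
with one new vertex for each edge of `G`, and a vertex `v` is adjacent to an edge-vertex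
`e` iff `v` is an endpoint of `e`; there are no other adjacencies. -/
def SimpleGraph.Subdiv {V : Type*} (G : SimpleGraph V) :
    SimpleGraph (V ⊕ G.edgeSet) where
  Adj a b :=
    (∃ (v : V) (e : G.edgeSet), a = Sum.inl v ∧ b = Sum.inr e ∧ v ∈ (e : Sym2 V)) ∨
    (∃ (v : V) (e : G.edgeSet), b = Sum.inl v ∧ a = Sum.inr e ∧ v ∈ (e : Sym2 V))
  symm := ⟨fun _ _ h => h.symm⟩
  loopless := ⟨by
    rintro a (⟨v, e, h1, h2, _⟩ | ⟨v, e, h1, h2, _⟩) <;> rw [h1] at h2 <;>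
      exact Sum.inl_ne_inr h2⟩

/-- For `n ≥ 2`, every coloring of the subdivision `Kₙ•` of the complete graph `Kₙ` all of
whose color classes are odd sets is injective on the `n` original vertices; consequently,
every partition of the vertex set of `Kₙ•` into odd sets has at least `n` parts. -/
theorem stmt12 (n : ℕ) (hn : 2 ≤ n) {C : Type*} [Fintype C]
    (c : Fin n ⊕ (⊤ : SimpleGraph (Fin n)).edgeSet → C)
    (hc : ∀ k : C, (⊤ : SimpleGraph (Fin n)).Subdiv.IsOddSet {x | c x = k}) :
    Function.Injective (fun i : Fin n => c (Sum.inl i)) ∧ n ≤ Fintype.card C := by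

  have hinj : Function.Injective (fun i : Fin n => c (Sum.inl i)) := by
    intro i j hij
    by_contra hne
    simp only at hij
    have hadj : (⊤ : SimpleGraph (Fin n)).Adj i j := hne
    have he : s(i, j) ∈ (⊤ : SimpleGraph (Fin n)).edgeSet := hadj
    set e : (⊤ : SimpleGraph (Fin n)).edgeSet := ⟨s(i, j), he⟩ with hedef
    have hmem : (Sum.inr e : Fin n ⊕ (⊤ : SimpleGraph (Fin n)).edgeSet) ∈
        {x | c x = c (Sum.inr e)} := rfl
    have hodd := hc (c (Sum.inr e)) _ hmem
    have hN : ∀ x, x ∈ (⊤ : SimpleGraph (Fin n)).Subdiv.neighborSet (Sum.inr e) ↔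
        (x = Sum.inl i ∨ x = Sum.inl j) := by
      intro x
      constructor
      · rintro (⟨v, e', h1, h2, h3⟩ | ⟨v, e', h1, h2, h3⟩)
        · exact absurd h1 (by simp)
        · have he' : e = e' := Sum.inr.inj h2
          rw [← he', hedef] at h3
          rcases Sym2.mem_iff.mp h3 with rfl | rfl
          · exact Or.inl h1
          · exact Or.inr h1
      · rintro (rfl | rfl)
        · exact Or.inr ⟨i, e, rfl, rfl, by rw [hedef]; exact Sym2.mem_mk_left i j⟩
        · exact Or.inr ⟨j, e, rfl, rfl, by rw [hedef]; exact Sym2.mem_mk_right i j⟩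
    by_cases hk : c (Sum.inl i) = c (Sum.inr e)
    · have hT : {x | c x = c (Sum.inr e)} ∩
          (⊤ : SimpleGraph (Fin n)).Subdiv.neighborSet (Sum.inr e) =
          {Sum.inl i, Sum.inl j} := by
        ext x
        simp only [Set.mem_inter_iff, Set.mem_setOf_eq, hN, Set.mem_insert_iff,
          Set.mem_singleton_iff]
        constructor
        · rintro ⟨_, h⟩; exact h
        · rintro (rfl | rfl)
          · exact ⟨hk, Or.inl rfl⟩
          · exact ⟨hij ▸ hk, Or.inr rfl⟩
      rw [hT, Set.ncard_pair (by simpa using hne)] at hodd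
      exact (by decide : ¬ Odd 2) hodd
    · have hT : {x | c x = c (Sum.inr e)} ∩
          (⊤ : SimpleGraph (Fin n)).Subdiv.neighborSet (Sum.inr e) = ∅ := by
        ext x
        simp only [Set.mem_inter_iff, Set.mem_setOf_eq, hN, Set.mem_empty_iff_false,
          iff_false, not_and]
        rintro hx (rfl | rfl)
        · exact hk hx
        · exact hk (hij ▸ hx)
      rw [hT, Set.ncard_empty] at hodd
      exact (by decide : ¬ Odd 0) hodd
  refine ⟨hinj, ?_⟩
  calc n = Fintype.card (Fin n) := (Fintype.card_fin n).symm
    _ ≤ Fintype.card C := Fintype.card_le_of_injective _ hinj
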